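/- If W is a positive-integer-valued random variable with finite mean, then its Shannon entropy in bits satisfies H(W) ≤ E[⌊log₂ W⌋] + log₂(1 + E[⌊log₂ W⌋]) + log₂ e. -/

import Mathlib

/-!
Gibbs' inequality bounds the entropy of `p` by its cross entropy against any sub-probability
`q`. Take for `q` the law under which `⌊log₂ W⌋` is geometric with ratio `θ` and `W` is uniform
on its dyadic block: then `-log₂ q(n) = ⌊log₂ n⌋ (1 - log₂ θ) - log₂ (1 - θ)`, so the cross entropy
is `m (1 - log₂ θ) - log₂ (1 - θ)` with `m = E[⌊log₂ W⌋]`. For `θ = m / (1 + m)` this equals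
`m + log₂ (1 + m) + m log₂ (1 + 1/m)`, and `m log₂ (1 + 1/m) ≤ m / (m ln 2) = log₂ e`.
-/

open Real Finset

theorem neg_mul_logb_le_of_pos {b P Q : ℝ} (hb : 1 < b) (hP : 0 ≤ P) (hQ : 0 < Q) :
    -(P * logb b P) ≤ -(P * logb b Q) + (Q - P) / log b := by
  rcases hP.eq_or_lt with rfl | hP
  · simp only [zero_mul, neg_zero, sub_zero, zero_add]
    exact div_nonneg hQ.le (log_nonneg hb.le)
  have key : P * (log Q - log P) ≤ Q - P := by
    have h := mul_le_mul_of_nonneg_left (log_le_sub_one_of_pos (div_pos hQ hP)) hP.le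
    rwa [log_div hQ.ne' hP.ne', mul_sub P (Q / P), mul_div_cancel₀ _ hP.ne', mul_one] at h
  have hdiff : -(P * logb b Q) + (Q - P) / log b - -(P * logb b P)
      = (Q - P - P * (log Q - log P)) / log b := by
    simp only [logb]; ring
  rw [← sub_nonneg, hdiff]
  exact div_nonneg (sub_nonneg.2 key) (log_nonneg hb.le)

theorem tsum_neg_mul_logb_le {ι : Type*} {b : ℝ} (hb : 1 < b) {p q : ι → ℝ}
    (hp : ∀ i, 0 ≤ p i) (hp1 : ∀ i, p i ≤ 1) (hps : Summable p)
    (hq : ∀ i, 0 ≤ q i) (hqs : Summable q) (hpq : ∀ i, q i = 0 → p i = 0)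
    (hqp : ∑' i, q i ≤ ∑' i, p i) (hcross : Summable fun i => p i * logb b (q i)) :
    ∑' i, -(p i * logb b (p i)) ≤ ∑' i, -(p i * logb b (q i)) := by
  have hlogb : 0 < log b := log_pos hb
  set g : ι → ℝ := fun i => -(p i * logb b (q i)) + (q i - p i) / log b
  have hg : Summable g := hcross.neg.add ((hqs.sub hps).div_const _)
  have hpoint : ∀ i, -(p i * logb b (p i)) ≤ g i := fun i => by
    rcases (hq i).eq_or_lt with h | h
    · simp [g, hpq i h.symm, ← h]
    · exact neg_mul_logb_le_of_pos hb (hp i) h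
  have hent : Summable fun i => -(p i * logb b (p i)) :=
    hg.of_nonneg_of_le (fun i => neg_nonneg.2 (mul_nonpos_of_nonneg_of_nonpos (hp i)
      (logb_nonpos hb (hp i) (hp1 i)))) hpoint
  calc ∑' i, -(p i * logb b (p i)) ≤ ∑' i, g i := hent.tsum_le_tsum hpoint hg
    _ = ∑' i, -(p i * logb b (q i)) + (∑' i, q i - ∑' i, p i) / log b := by
      rw [hcross.neg.tsum_add ((hqs.sub hps).div_const _), tsum_div_const, hqs.tsum_sub hps]
    _ ≤ ∑' i, -(p i * logb b (q i)) := by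
      have : (∑' i, q i - ∑' i, p i) / log b ≤ 0 :=
        div_nonpos_of_nonpos_of_nonneg (by linarith) hlogb.le
      linarith

-- `(1 - θ) θ^L` spread uniformly over the `2^L` integers `n` with `⌊log₂ n⌋ = L`.
noncomputable def floorLogGeom (θ : ℝ) (n : ℕ) : ℝ :=
  if n = 0 then 0 else (1 - θ) * (θ / 2) ^ Nat.log 2 n

namespace floorLogGeom

variable {θ : ℝ}

theorem nonneg (h0 : 0 ≤ θ) (h1 : θ ≤ 1) (n : ℕ) : 0 ≤ floorLogGeom θ n := by
  unfold floorLogGeom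
  split_ifs
  · exact le_rfl
  · exact mul_nonneg (sub_nonneg.2 h1) (by positivity)

theorem pos (h0 : 0 < θ) (h1 : θ < 1) {n : ℕ} (hn : n ≠ 0) : 0 < floorLogGeom θ n := by
  rw [floorLogGeom, if_neg hn]
  exact mul_pos (sub_pos.2 h1) (by positivity)

theorem sum_Ico_two_pow (L : ℕ) :
    ∑ n ∈ Ico (2 ^ L) (2 ^ (L + 1)), floorLogGeom θ n = (1 - θ) * θ ^ L := by
  have hconst : ∀ n ∈ Ico (2 ^ L) (2 ^ (L + 1)), floorLogGeom θ n = (1 - θ) * (θ / 2) ^ L := by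
    intro n hn
    rw [mem_Ico] at hn
    rw [floorLogGeom, if_neg ((Nat.two_pow_pos L).trans_le hn.1).ne',
      Nat.log_eq_of_pow_le_of_lt_pow hn.1 hn.2]
  rw [sum_congr rfl hconst, sum_const, Nat.card_Ico, pow_succ, Nat.mul_two, Nat.add_sub_cancel,
    nsmul_eq_mul, div_pow]
  push_cast
  field_simp

theorem sum_range_two_pow (L : ℕ) :
    ∑ n ∈ range (2 ^ L), floorLogGeom θ n = 1 - θ ^ L := by
  induction L with
  | zero => simp [floorLogGeom]
  | succ L ih =>
    rw [range_eq_Ico, ← sum_Ico_consecutive _ (Nat.zero_le _)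
      (Nat.pow_le_pow_right two_pos L.le_succ), ← range_eq_Ico, ih, sum_Ico_two_pow]
    ring

theorem sum_range_le_one (h0 : 0 ≤ θ) (h1 : θ ≤ 1) (N : ℕ) :
    ∑ n ∈ range N, floorLogGeom θ n ≤ 1 :=
  calc ∑ n ∈ range N, floorLogGeom θ n ≤ ∑ n ∈ range (2 ^ N), floorLogGeom θ n :=
        sum_le_sum_of_subset_of_nonneg (range_subset_range.2 Nat.lt_two_pow_self.le)
          fun n _ _ => nonneg h0 h1 n
    _ = 1 - θ ^ N := sum_range_two_pow N
    _ ≤ 1 := sub_le_self _ (pow_nonneg h0 N)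

theorem summable (h0 : 0 ≤ θ) (h1 : θ ≤ 1) : Summable (floorLogGeom θ) :=
  summable_of_sum_range_le (nonneg h0 h1) (sum_range_le_one h0 h1)

theorem tsum_le_one (h0 : 0 ≤ θ) (h1 : θ ≤ 1) : ∑' n, floorLogGeom θ n ≤ 1 :=
  Real.tsum_le_of_sum_range_le (nonneg h0 h1) (sum_range_le_one h0 h1)

theorem neg_mul_logb (h0 : 0 < θ) (h1 : θ < 1) {n : ℕ} (hn : n ≠ 0) (x : ℝ) :
    -(x * logb 2 (floorLogGeom θ n)) =
      (Nat.log 2 n : ℝ) * x * (1 - logb 2 θ) - x * logb 2 (1 - θ) := by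
  rw [floorLogGeom, if_neg hn, logb_mul (sub_pos.2 h1).ne' (by positivity), logb_pow,
    logb_div h0.ne' two_ne_zero, logb_self_eq_one one_lt_two]
  ring

end floorLogGeom

theorem tsum_neg_mul_logb_le_of_floorLogGeom (p : ℕ → ℝ) (hnn : ∀ n, 0 ≤ p n) (h0 : p 0 = 0)
    (hp1 : ∀ n, p n ≤ 1) (hsum : Summable p) (htot : ∑' n, p n = 1)
    (hlog : Summable fun n : ℕ => (Nat.log 2 n : ℝ) * p n) {θ : ℝ} (hθ0 : 0 < θ) (hθ1 : θ < 1) :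
    ∑' n, -(p n * logb 2 (p n)) ≤
      (∑' n, (Nat.log 2 n : ℝ) * p n) * (1 - logb 2 θ) - logb 2 (1 - θ) := by
  have hcross : ∀ n, -(p n * logb 2 (floorLogGeom θ n)) =
      (Nat.log 2 n : ℝ) * p n * (1 - logb 2 θ) - p n * logb 2 (1 - θ) := fun n => by
    rcases eq_or_ne n 0 with rfl | hn
    · simp [h0]
    · exact floorLogGeom.neg_mul_logb hθ0 hθ1 hn (p n)
  have hcross_summable : Summable fun n => p n * logb 2 (floorLogGeom θ n) := by
    refine (((hlog.mul_right (1 - logb 2 θ)).sub (hsum.mul_right (logb 2 (1 - θ)))).neg).congr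
      fun n => ?_
    rw [← hcross, neg_neg]
  calc ∑' n, -(p n * logb 2 (p n))
      ≤ ∑' n, -(p n * logb 2 (floorLogGeom θ n)) :=
        tsum_neg_mul_logb_le one_lt_two hnn hp1 hsum (floorLogGeom.nonneg hθ0.le hθ1.le)
          (floorLogGeom.summable hθ0.le hθ1.le)
          (fun n hn => by
            obtain rfl : n = 0 := by_contra fun hn' => (floorLogGeom.pos hθ0 hθ1 hn').ne' hn
            exact h0)
          (htot ▸ floorLogGeom.tsum_le_one hθ0.le hθ1.le) hcross_summable
    _ = _ := by
      simp_rw [hcross]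
      rw [(hlog.mul_right _).tsum_sub (hsum.mul_right _), tsum_mul_right, tsum_mul_right, htot,
        one_mul]

theorem mul_logb_one_add_div_self_le {b m : ℝ} (hb : 1 < b) (hm : 0 < m) :
    m * logb b ((1 + m) / m) ≤ logb b (exp 1) := by
  have h : m * log ((1 + m) / m) ≤ 1 := by
    have := mul_le_mul_of_nonneg_left (log_le_sub_one_of_pos (by positivity : 0 < (1 + m) / m))
      hm.le
    rwa [mul_sub, mul_div_cancel₀ _ hm.ne', mul_one, add_sub_cancel_right] at this
  rw [logb, logb, log_exp, ← mul_div_assoc]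
  exact div_le_div_of_nonneg_right h (log_nonneg hb.le)

-- `θ = m / (1 + m)` makes the geometric law of ratio `θ` have mean `m`; at `m = 0` use `log 2 < 1`.
theorem exists_mul_one_sub_logb_sub_logb_one_sub_le {m : ℝ} (hm : 0 ≤ m) :
    ∃ θ, 0 < θ ∧ θ < 1 ∧
      m * (1 - logb 2 θ) - logb 2 (1 - θ) ≤ m + logb 2 (1 + m) + logb 2 (exp 1) := by
  rcases hm.eq_or_lt with rfl | hm
  · refine ⟨1 / 2, by norm_num, by norm_num, ?_⟩
    rw [zero_mul, zero_sub, show (1 : ℝ) - 1 / 2 = 2⁻¹ by norm_num, logb_inv,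
      logb_self_eq_one one_lt_two, neg_neg, add_zero, logb_one, zero_add, zero_add, logb, log_exp,
      le_div_iff₀ (log_pos one_lt_two), one_mul]
    exact (log_two_lt_d9.trans (by norm_num)).le
  · refine ⟨m / (1 + m), by positivity, (div_lt_one (by positivity)).2 (by linarith), ?_⟩
    have h1θ : 1 - m / (1 + m) = (1 + m)⁻¹ := by field_simp; ring
    have hθ : -logb 2 (m / (1 + m)) = logb 2 ((1 + m) / m) := by rw [← logb_inv, inv_div]
    rw [h1θ, logb_inv, sub_eq_add_neg 1 (logb 2 _), hθ, mul_add, mul_one]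
    linarith [mul_logb_one_add_div_self_le one_lt_two hm]

theorem entropy_le_mean_floor_log (p : ℕ → ℝ) (hnn : ∀ n, 0 ≤ p n) (h0 : p 0 = 0)
    (hsum : Summable p) (htot : ∑' n, p n = 1)
    (hmean : Summable fun n : ℕ => (n : ℝ) * p n) :
    ∑' n, -(p n * Real.logb 2 (p n)) ≤
      (∑' n, (Nat.log 2 n : ℝ) * p n) +
        Real.logb 2 (1 + ∑' n, (Nat.log 2 n : ℝ) * p n) +
        Real.logb 2 (Real.exp 1) := by
  have hp1 : ∀ n, p n ≤ 1 := fun n => htot ▸ hsum.le_tsum n fun j _ => hnn j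
  have hlog_nonneg : ∀ n, 0 ≤ (Nat.log 2 n : ℝ) * p n := fun n =>
    mul_nonneg (Nat.cast_nonneg _) (hnn n)
  have hlog : Summable fun n : ℕ => (Nat.log 2 n : ℝ) * p n :=
    hmean.of_nonneg_of_le hlog_nonneg fun n =>
      mul_le_mul_of_nonneg_right (by exact_mod_cast Nat.log_le_self 2 n) (hnn n)
  obtain ⟨θ, hθ0, hθ1, hθ⟩ := exists_mul_one_sub_logb_sub_logb_one_sub_le (tsum_nonneg hlog_nonneg)
  exact (tsum_neg_mul_logb_le_of_floorLogGeom p hnn h0 hp1 hsum htot hlog hθ0 hθ1).trans hθ
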